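/- arXiv:2211.15349 — 2 statements merged into one kernel-verified Lean document; each statement's English description precedes it below -/
import Mathlib

section
/- For any resource levels ℓ, ℓ' ∈ {0,...,cap}, state s, and action a: resup(ℓ, s, a) ≥ ℓ' if and only if ℓ ≥ resupinv(ℓ', s, a) (with the convention that ⊥ < n < ∞ for every integer n, and resup(ℓ,s,a) = ⊥ counts as < ℓ'). -/
/- Resource update function `resup` and its inverse `resupinv` for consumption
models with capacity `cap`, consumption `γ` and reload states `R`.
Resource levels live in `{0,…,cap}` extended with a bottom element `⊥`
(`WithBot ℕ`); the inverse takes values in `ℕ∞ = ℕ ∪ {∞}`. -/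

open Classical
attribute [local instance] Classical.propDecidable

noncomputable section

variable {S A : Type*}

/-- The resource update function: from level `ℓ` in state `s` playing `a`,
the new level is `ℓ - γ s a` (or `cap - γ s a` in a reload state), and `⊥`
if the resource would be exhausted. -/
def resup (cap : ℕ) (γ : S → A → ℕ) (R : Set S) (ℓ : ℕ) (s : S) (a : A) : WithBot ℕ :=
  if s ∈ R then (if γ s a ≤ cap then ((cap - γ s a : ℕ) : WithBot ℕ) else ⊥)
  else (if γ s a ≤ ℓ then ((ℓ - γ s a : ℕ) : WithBot ℕ) else ⊥)

/-- The inverse resource update function: the minimal amount of resource needed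
in `s` so that after playing `a` at least `ℓ'` units remain (`∞` if impossible). -/
def resupinv (cap : ℕ) (γ : S → A → ℕ) (R : Set S) (ℓ' : ℕ) (s : S) (a : A) : ℕ∞ :=
  if ℓ' + γ s a ≤ cap then (if s ∈ R then 0 else ((ℓ' + γ s a : ℕ) : ℕ∞)) else ⊤

theorem WithBot.coe_le_ite_coe_sub_iff (n c m : ℕ) :
    (n : WithBot ℕ) ≤ (if c ≤ m then ((m - c : ℕ) : WithBot ℕ) else ⊥) ↔ n + c ≤ m := by
  split_ifs
  · rw [Nat.cast_le]
    omega
  · simp only [WithBot.le_bot_iff, WithBot.natCast_ne_bot, false_iff]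
    omega

theorem coe_le_resup_iff (cap : ℕ) (γ : S → A → ℕ) (R : Set S) (ℓ ℓ' : ℕ) (s : S) (a : A) :
    (ℓ' : WithBot ℕ) ≤ resup cap γ R ℓ s a ↔ ℓ' + γ s a ≤ if s ∈ R then cap else ℓ := by
  unfold resup
  by_cases hR : s ∈ R <;> simp only [hR, if_true, if_false] <;>
    exact WithBot.coe_le_ite_coe_sub_iff _ _ _

theorem resupinv_le_coe_iff (cap : ℕ) (γ : S → A → ℕ) (R : Set S) (ℓ ℓ' : ℕ) (s : S) (a : A) :
    resupinv cap γ R ℓ' s a ≤ (ℓ : ℕ∞) ↔ ℓ' + γ s a ≤ cap ∧ (s ∉ R → ℓ' + γ s a ≤ ℓ) := by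
  unfold resupinv
  split_ifs with hcap hR
  · simp [hcap, hR]
  · simp only [hcap, hR, true_and, not_false_eq_true, forall_const]
    exact Nat.cast_le
  · simp [hcap]

theorem resup_ge_iff_ge_resupinv_general (cap : ℕ) (γ : S → A → ℕ) (R : Set S)
    (ℓ ℓ' : ℕ) (hℓ : ℓ ≤ cap) (s : S) (a : A) :
    ((ℓ' : WithBot ℕ) ≤ resup cap γ R ℓ s a) ↔ (resupinv cap γ R ℓ' s a ≤ (ℓ : ℕ∞)) := by
  rw [coe_le_resup_iff, resupinv_le_coe_iff]
  by_cases hR : s ∈ R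
  · simp [hR]
  · simp only [hR, if_false, not_false_eq_true, forall_const]
    exact ⟨fun h ↦ ⟨h.trans hℓ, h⟩, And.right⟩

/-- Galois-connection-style equivalence between `resup` and `resupinv`:
`resup (ℓ, s, a) ≥ ℓ'` iff `ℓ ≥ resupinv (ℓ', s, a)` (with `⊥ < n < ∞` for every
integer `n`; in particular `resup (ℓ,s,a) = ⊥` counts as `< ℓ'`). -/
theorem resup_ge_iff_ge_resupinv (cap : ℕ) (γ : S → A → ℕ) (R : Set S)
    (ℓ ℓ' : ℕ) (hℓ : ℓ ≤ cap) (hℓ' : ℓ' ≤ cap) (s : S) (a : A) :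
    ((ℓ' : WithBot ℕ) ≤ resup cap γ R ℓ s a) ↔ (resupinv cap γ R ℓ' s a ≤ (ℓ : ℕ∞)) :=
  resup_ge_iff_ge_resupinv_general cap γ R ℓ ℓ' hℓ s a
end
end

section
/- Any CoPOMDP can be transformed in linear time into a consistent CoPOMDP by inserting, for every state-action pair (s,a), a fresh intermediate state t_{s,a} that deterministically receives the transition from s under a, emits the consumption value γ(s,a) as its observation, and whose every outgoing action has distribution δ(s,a) and consumption γ(s,a); the resulting CoPOMDP is consistent. -/
/- Each observation of the transformed CoPOMDP pins down the consumption of every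
state that can emit it: an observation from `Ω` is emitted only by original states,
which consume `0`, and the observation `n : ℕ` only by intermediate states `t_{s,a}`
with `γ(s,a) = n`. -/

open Classical
attribute [local instance] Classical.propDecidable

noncomputable section

variable {S A Ω : Type*}

/-- A CoPOMDP: probabilistic transitions `δ`, probabilistic observations `obs`,
consumption `γ`, reload states `R` and capacity `cap`. -/
structure CoPOMDP (S A Ω : Type*) where
  δ : S → A → S → ℝ
  obs : S → Ω → ℝ
  γ : S → A → ℕ
  R : Set S
  cap : ℕ

/-- States of the transformed CoPOMDP: original states plus a fresh state
`t_{s,a}` for every state-action pair. -/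
abbrev TrState (S A : Type*) := S ⊕ (S × A)

/-- Transitions of the transformed CoPOMDP: `δ'(s,a) = Dirac(t_{s,a})` and
`δ'(t_{s,a}, b) = δ(s,a)` for every action `b`. -/
def trδ (M : CoPOMDP S A Ω) : TrState S A → A → TrState S A → ℝ
  | Sum.inl s, a, Sum.inr p => if p = (s, a) then 1 else 0
  | Sum.inl _, _, Sum.inl _ => 0
  | Sum.inr (s, a), _, Sum.inl t => M.δ s a t
  | Sum.inr _, _, Sum.inr _ => 0

/-- Observations of the transformed CoPOMDP (over `Ω ⊕ ℕ`): original states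
keep their observations, and `t_{s,a}` emits the consumption value `γ(s,a)`. -/
def trObs (M : CoPOMDP S A Ω) : TrState S A → Ω ⊕ ℕ → ℝ
  | Sum.inl s, Sum.inl o => M.obs s o
  | Sum.inl _, Sum.inr _ => 0
  | Sum.inr (s, a), Sum.inr n => if n = M.γ s a then 1 else 0
  | Sum.inr _, Sum.inl _ => 0

/-- Consumption of the transformed CoPOMDP: original states consume `0`, and
`t_{s,a}` consumes `γ(s,a)` under every action. -/
def trγ (M : CoPOMDP S A Ω) : TrState S A → A → ℕ
  | Sum.inl _, _ => 0
  | Sum.inr (s, a), _ => M.γ s a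

def obsConsumption : Ω ⊕ ℕ → ℕ :=
  Sum.elim (fun _ => 0) id

theorem trγ_eq_obsConsumption_of_trObs_pos (M : CoPOMDP S A Ω) {p : TrState S A}
    {o : Ω ⊕ ℕ} (h : 0 < trObs M p o) (b : A) : trγ M p b = obsConsumption o := by
  rcases p with s | ⟨s, a⟩ <;> rcases o with o | n
  · rfl
  · simp [trObs] at h
  · simp [trObs] at h
  · have hn : n = M.γ s a := by
      by_contra hne
      simp [trObs, hne] at h
    simp [trγ, obsConsumption, hn]

/-- the transformed CoPOMDP is consistent: any two lookalike
states (states that can emit a common observation with positive probability)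
have equal consumption under every action. -/
theorem transformed_consistent (M : CoPOMDP S A Ω) :
    ∀ p q : TrState S A, (∃ o, 0 < trObs M p o ∧ 0 < trObs M q o) →
      ∀ b, trγ M p b = trγ M q b := by
  rintro p q ⟨o, hp, hq⟩ b
  rw [trγ_eq_obsConsumption_of_trObs_pos M hp, trγ_eq_obsConsumption_of_trObs_pos M hq]
end
end
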